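/- arXiv:2502.11790 — 2 statements merged into one kernel-verified Lean document; each statement's English description precedes it below -/
import Mathlib

section
/- Let n ≥ 2 and let M : Fin(n+1) × Fin(n) ⥤ ModuleCat ℂ be the functor on the componentwise-ordered product poset with M(i,j) = F_{i+1} and maps the submodule inclusions (identities in the second coordinate). Then M is a projective object of the abelian functor category Fin(n+1) × Fin(n) ⥤ ModuleCat ℂ; equivalently, the projective dimension of M is 0. -/
open CategoryTheory

/-- `F p`: the span of the first `p` standard basis vectors of `ℂ^{n+1}`. -/
noncomputable def Fstd (n p : ℕ) : Submodule ℂ (Fin (n+1) → ℂ) :=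
  Submodule.span ℂ ((fun i : Fin (n+1) => (Pi.single i 1 : Fin (n+1) → ℂ)) '' {i | (i : ℕ) < p})

lemma Fstd_mono (n : ℕ) {p p' : ℕ} (h : p ≤ p') : Fstd n p ≤ Fstd n p' :=
  Submodule.span_mono (Set.image_mono (fun _ hi => lt_of_lt_of_le hi h))

/-- The representation `M` of the grid quiver with relations, as a functor on the
componentwise-ordered product poset `Fin (n+1) × Fin n`: the value at `(i,j)` is `F (i+1)`
and the maps are the submodule inclusions (identities in the second coordinate). -/
noncomputable def Mgrid (n : ℕ) : (Fin (n+1) × Fin n) ⥤ ModuleCat ℂ where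
  obj x := ModuleCat.of ℂ (Fstd n ((x.1 : ℕ) + 1))
  map {x y} f := ModuleCat.ofHom (Submodule.inclusion (Fstd_mono n (by
      have h : x.1 ≤ y.1 := leOfHom f.1
      exact Nat.add_le_add_right h 1)) : Fstd n ((x.1 : ℕ) + 1) →ₗ[ℂ] Fstd n ((y.1 : ℕ) + 1))
  map_id _ := rfl
  map_comp _ _ := rfl

lemma single_mem (n p : ℕ) (k : Fin (n+1)) (h : (k : ℕ) < p) :
    (Pi.single k 1 : Fin (n+1) → ℂ) ∈ Fstd n p :=
  Submodule.subset_span ⟨k, h, rfl⟩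

lemma Fstd_apply_eq_zero {n p : ℕ} {v : Fin (n+1) → ℂ} (hv : v ∈ Fstd n p)
    {k : Fin (n+1)} (hk : p ≤ (k : ℕ)) : v k = 0 := by
  have hle : Fstd n p ≤ LinearMap.ker (LinearMap.proj (R := ℂ) (φ := fun _ : Fin (n+1) => ℂ) k) := by
    rw [Fstd, Submodule.span_le]
    rintro _ ⟨i, hi, rfl⟩
    have hik : k ≠ i := by
      intro h; subst h; exact absurd hi (by simp; omega)
    simp only [SetLike.mem_coe, LinearMap.mem_ker, LinearMap.proj_apply]
    exact Pi.single_eq_of_ne hik 1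
  exact hle hv

/-- The linear map out of `Fstd n p` sending the basis vector `b_k` to `y k`. -/
noncomputable def liftApp {n p : ℕ} {N : Type*} [AddCommGroup N] [Module ℂ N]
    (y : Fin (n+1) → N) : (Fstd n p : Submodule ℂ (Fin (n+1) → ℂ)) →ₗ[ℂ] N where
  toFun v := ∑ k, (v : Fin (n+1) → ℂ) k • y k
  map_add' v w := by simp [add_smul, Finset.sum_add_distrib]
  map_smul' c v := by simp [smul_smul, Finset.smul_sum]

@[simp] lemma liftApp_apply {n p : ℕ} {N : Type*} [AddCommGroup N] [Module ℂ N]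
    (y : Fin (n+1) → N) (v : Fstd n p) :
    liftApp (p := p) y v = ∑ k, (v : Fin (n+1) → ℂ) k • y k := rfl

lemma liftApp_eq {n p : ℕ} {N : Type*} [AddCommGroup N] [Module ℂ N]
    (y y' : Fin (n+1) → N) (h : ∀ k : Fin (n+1), (k : ℕ) < p → y k = y' k) (v : Fstd n p) :
    liftApp (p := p) y v = liftApp (p := p) y' v := by
  simp only [liftApp_apply]
  refine Finset.sum_congr rfl fun k _ => ?_
  by_cases hk : (k : ℕ) < p
  · rw [h k hk]
  · rw [Fstd_apply_eq_zero v.2 (by omega)]; simp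

lemma map_liftApp {n p : ℕ} {N N' : Type*} [AddCommGroup N] [Module ℂ N]
    [AddCommGroup N'] [Module ℂ N'] (g : N →ₗ[ℂ] N') (y : Fin (n+1) → N) (v : Fstd n p) :
    g (liftApp (p := p) y v) = liftApp (p := p) (fun k => g (y k)) v := by
  simp [map_sum]

lemma liftApp_inclusion {n p p' : ℕ} {N : Type*} [AddCommGroup N] [Module ℂ N]
    (h : Fstd n p ≤ Fstd n p') (y : Fin (n+1) → N) (v : Fstd n p) :
    liftApp (p := p') y (Submodule.inclusion h v) = liftApp (p := p) y v := rfl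

lemma liftApp_single {n p : ℕ} (sv : Fin (n+1) → Fstd n p)
    (h : ∀ k : Fin (n+1), (k : ℕ) < p → (sv k : Fin (n+1) → ℂ) = Pi.single k 1)
    (v : Fstd n p) : liftApp (p := p) sv v = v := by
  apply Subtype.ext
  rw [liftApp_apply, Submodule.coe_sum]
  conv_rhs => rw [show ((v : Fin (n+1) → ℂ)) = ∑ k, Pi.single k ((v : Fin (n+1) → ℂ) k) from
    (Finset.univ_sum_single _).symm]
  refine Finset.sum_congr rfl fun k _ => ?_
  by_cases hk : (k : ℕ) < p
  · rw [SetLike.val_smul, h k hk, ← Pi.single_smul, smul_eq_mul, mul_one]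
  · rw [Fstd_apply_eq_zero v.2 (by omega)]
    simp

/-- `M` is a projective object of the abelian functor category
`Fin (n+1) × Fin n ⥤ ModuleCat ℂ`; equivalently, the projective dimension of `M` is `0`. -/
theorem Mgrid_projective (n : ℕ) (hn : 2 ≤ n) : Projective (Mgrid n) := by
  constructor
  intro E X f e he
  have hE : ∀ x, Function.Surjective (e.app x) := fun x => by
    rw [← ModuleCat.epi_iff_surjective]
    exact (NatTrans.epi_iff_epi_app e).1 he x
  set j0 : Fin n := ⟨0, by omega⟩ with hj0
  set bk : ∀ k : Fin (n+1), (Mgrid n).obj (k, j0) := fun k =>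
    ⟨Pi.single k 1, single_mem n _ k (Nat.lt_succ_self _)⟩ with hbk
  choose xk hxk using fun k : Fin (n+1) => hE (k, j0) (f.app (k, j0) (bk k))
  set hom : ∀ (x : Fin (n+1) × Fin n) (k : Fin (n+1)), (k : ℕ) ≤ (x.1 : ℕ) → ((k, j0) ⟶ x) :=
    fun x k h => (homOfLE (Fin.le_def.mpr h), homOfLE (Fin.le_def.mpr (Nat.zero_le _))) with hhom
  set y : ∀ (x : Fin (n+1) × Fin n), Fin (n+1) → E.obj x := fun x k =>
    if h : (k : ℕ) ≤ (x.1 : ℕ) then E.map (hom x k h) (xk k) else 0 with hy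
  set sv : ∀ (x : Fin (n+1) × Fin n), Fin (n+1) → (Mgrid n).obj x := fun x k =>
    if h : (k : ℕ) ≤ (x.1 : ℕ) then ⟨Pi.single k 1, single_mem n _ k (by omega)⟩ else 0 with hsv
  let F' : ∀ x, (Mgrid n).obj x ⟶ E.obj x := fun x =>
    ModuleCat.ofHom (liftApp (p := (x.1 : ℕ) + 1) (y x) :
      (Fstd n ((x.1 : ℕ) + 1) : Submodule ℂ (Fin (n+1) → ℂ)) →ₗ[ℂ] E.obj x)
  refine ⟨{ app := F', naturality := ?_ }, ?_⟩
  · intro x z g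
    ext v
    have hxz : (x.1 : ℕ) ≤ (z.1 : ℕ) := Fin.le_def.mp (leOfHom g.1)
    show F' z ((Mgrid n).map g v) = E.map g (F' x v)
    calc F' z ((Mgrid n).map g v)
        = liftApp (p := (x.1 : ℕ) + 1) (y z) v :=
          liftApp_inclusion (Fstd_mono n (by omega)) (y z) v
      _ = liftApp (p := (x.1 : ℕ) + 1) (fun k => E.map g (y x k)) v := by
          refine liftApp_eq _ _ (fun k hk => ?_) v
          have h : (k : ℕ) ≤ (x.1 : ℕ) := by omega
          have h' : (k : ℕ) ≤ (z.1 : ℕ) := le_trans h hxz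
          simp only [hy, dif_pos h, dif_pos h']
          calc E.map (hom z k h') (xk k)
              = (E.map (hom x k h) ≫ E.map g) (xk k) := by
                rw [← E.map_comp]; congr 1
            _ = E.map g (E.map (hom x k h) (xk k)) := rfl
      _ = E.map g (F' x v) := (map_liftApp (E.map g).hom (y x) v).symm
  · ext x v
    show e.app x (F' x v) = f.app x v
    have hval : ∀ k : Fin (n+1), (k : ℕ) < (x.1 : ℕ) + 1 →
        ((show Fstd n ((x.1 : ℕ) + 1) from sv x k : Fstd n ((x.1 : ℕ) + 1)) : Fin (n+1) → ℂ) = Pi.single k 1 := by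
      intro k hk
      simp only [hsv, dif_pos (show (k : ℕ) ≤ (x.1 : ℕ) by omega)]
      erw [dif_pos (show (k : ℕ) ≤ (x.1 : ℕ) by omega)]
    calc e.app x (F' x v)
        = liftApp (p := (x.1 : ℕ) + 1) (fun k => e.app x (y x k)) v :=
          map_liftApp (e.app x).hom (y x) v
      _ = liftApp (p := (x.1 : ℕ) + 1) (fun k => f.app x (sv x k)) v := by
          refine liftApp_eq _ _ (fun k hk => ?_) v
          have h : (k : ℕ) ≤ (x.1 : ℕ) := by omega
          simp only [hy, hsv, dif_pos h]
          erw [dif_pos h]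
          calc e.app x (E.map (hom x k h) (xk k))
              = (E.map (hom x k h) ≫ e.app x) (xk k) := rfl
            _ = (e.app (k, j0) ≫ X.map (hom x k h)) (xk k) := by rw [e.naturality]
            _ = X.map (hom x k h) (f.app (k, j0) (bk k)) := by
                show X.map (hom x k h) (e.app (k, j0) (xk k)) = _
                rw [hxk k]
            _ = ((Mgrid n).map (hom x k h) ≫ f.app x) (bk k) := by rw [f.naturality]; rfl
            _ = f.app x (((Mgrid n).map (hom x k h)) (bk k)) := rfl
            _ = f.app x ⟨Pi.single k 1, single_mem n _ k (by omega)⟩ := by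
                congr 1
      _ = f.app x (liftApp (p := (x.1 : ℕ) + 1) (sv x) v) :=
          (map_liftApp (f.app x).hom (sv x) v).symm
      _ = f.app x v := congrArg _ (liftApp_single (sv x) hval v)
end

section
/- Let n ≥ 2 and let M : Fin(n+1) × Fin(n) ⥤ ModuleCat ℂ be the functor with M(i,j) = F_{i+1} and maps the submodule inclusions. For 0 ≤ i ≤ n, let P_i : Fin(n+1) × Fin(n) ⥤ ModuleCat ℂ be the functor with P_i(p,q) = ℂ for p ≥ i and P_i(p,q) = 0 for p < i, with identity maps between nonzero values. Then M is isomorphic to the direct sum ⨁_{i=0}^{n} P_i in the functor category Fin(n+1) × Fin(n) ⥤ ModuleCat ℂ. -/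
open CategoryTheory CategoryTheory.Limits

/-- The submodule of `ℂ` which is everything for `i ≤ p` and `0` otherwise; the carrier of
the value of the projective representation `P_i` at the vertex `(p,q)`. -/
noncomputable def psub (n : ℕ) (i : Fin (n+1)) (x : Fin (n+1) × Fin n) : Submodule ℂ ℂ :=
  if i ≤ x.1 then ⊤ else ⊥

lemma psub_mono (n : ℕ) (i : Fin (n+1)) {x y : Fin (n+1) × Fin n} (h : x.1 ≤ y.1) :
    psub n i x ≤ psub n i y := by
  unfold psub
  by_cases hi : i ≤ x.1
  · rw [if_pos hi, if_pos (le_trans hi h)]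
  · rw [if_neg hi]
    exact bot_le

/-- The indecomposable projective representation `P_i` of the grid quiver, with value `ℂ`
(realised as the full submodule of `ℂ`) at the vertices `(p,q)` with `p ≥ i`, value `0`
elsewhere, and identity maps between the nonzero values. -/
noncomputable def Pfun (n : ℕ) (i : Fin (n+1)) : (Fin (n+1) × Fin n) ⥤ ModuleCat ℂ where
  obj x := ModuleCat.of ℂ (psub n i x)
  map {x y} f := ModuleCat.ofHom (Submodule.inclusion (psub_mono n i (leOfHom f.1)) :
    psub n i x →ₗ[ℂ] psub n i y)
  map_id _ := rfl
  map_comp _ _ := rfl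

lemma apply_eq_zero_of_mem_Fstd {n p : ℕ} {v : Fin (n+1) → ℂ} (hv : v ∈ Fstd n p)
    {i : Fin (n+1)} (hi : p ≤ (i : ℕ)) : v i = 0 := by
  induction hv using Submodule.span_induction with
  | mem w hw =>
    obtain ⟨j, hj, rfl⟩ := hw
    exact Pi.single_eq_of_ne (fun h => absurd (h ▸ hj) (not_lt.2 hi)) 1
  | zero => rfl
  | add _ _ _ _ h1 h2 => simp [h1, h2]
  | smul c _ _ h => simp [h]

lemma single_mem_Fstd {n p : ℕ} {i : Fin (n+1)} (hi : (i : ℕ) < p) :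
    (Pi.single i 1 : Fin (n+1) → ℂ) ∈ Fstd n p :=
  Submodule.subset_span ⟨i, hi, rfl⟩

/-- The component of the projection `M ⟶ P_i` at `x`: take the `i`-th coordinate. -/
noncomputable def fapp (n : ℕ) (i : Fin (n+1)) (x : Fin (n+1) × Fin n) :
    ↥(Fstd n ((x.1 : ℕ) + 1)) →ₗ[ℂ] ↥(psub n i x) where
  toFun v := ⟨(v : Fin (n+1) → ℂ) i, by
    by_cases hi : i ≤ x.1
    · simp [psub, if_pos hi]
    · have h0 : (v : Fin (n+1) → ℂ) i = 0 := by
        refine apply_eq_zero_of_mem_Fstd v.2 ?_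
        exact Nat.succ_le_of_lt (Fin.lt_iff_val_lt_val.mp (lt_of_not_ge hi))
      simp [psub, if_neg hi, h0]⟩
  map_add' v w := rfl
  map_smul' c v := rfl

/-- The component of the inclusion `P_i ⟶ M` at `x`: send `c` to `c • e_i`. -/
noncomputable def gapp (n : ℕ) (i : Fin (n+1)) (x : Fin (n+1) × Fin n) :
    ↥(psub n i x) →ₗ[ℂ] ↥(Fstd n ((x.1 : ℕ) + 1)) where
  toFun c := ⟨(c : ℂ) • (Pi.single i 1 : Fin (n+1) → ℂ), by
    by_cases hi : i ≤ x.1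
    · exact Submodule.smul_mem _ _ (single_mem_Fstd (Nat.lt_succ_of_le hi))
    · have hc : (c : ℂ) = 0 := by
        have hm := c.2
        unfold psub at hm
        simp only [if_neg hi, Submodule.mem_bot] at hm
        exact hm
      simp [hc]⟩
  map_add' v w := Subtype.ext (by simp [add_smul])
  map_smul' c v := Subtype.ext (by simp [mul_smul])

lemma sum_gf (n : ℕ) (x : Fin (n+1) × Fin n) :
    ∑ j : Fin (n+1), (gapp n j x).comp (fapp n j x) = LinearMap.id := by
  apply LinearMap.ext
  intro v
  rw [LinearMap.sum_apply]
  apply Subtype.ext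
  rw [Submodule.coe_sum]
  show ∑ j : Fin (n+1), (v : Fin (n+1) → ℂ) j • (Pi.single j 1 : Fin (n+1) → ℂ)
      = (v : Fin (n+1) → ℂ)
  have hterm : ∀ j : Fin (n+1),
      (v : Fin (n+1) → ℂ) j • (Pi.single j 1 : Fin (n+1) → ℂ)
        = Pi.single j ((v : Fin (n+1) → ℂ) j) := by
    intro j
    ext k
    by_cases h : k = j
    · subst h; simp
    · simp [Pi.single_eq_of_ne h]
  rw [Finset.sum_congr rfl (fun j _ => hterm j)]
  exact Finset.univ_sum_single _

lemma fg_same (n : ℕ) (j : Fin (n+1)) (x : Fin (n+1) × Fin n) :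
    (fapp n j x).comp (gapp n j x) = LinearMap.id := by
  apply LinearMap.ext
  intro c
  apply Subtype.ext
  show (c : ℂ) • (Pi.single j 1 : Fin (n+1) → ℂ) j = (c : ℂ)
  simp

lemma fg_ne (n : ℕ) {j k : Fin (n+1)} (h : j ≠ k) (x : Fin (n+1) × Fin n) :
    (fapp n k x).comp (gapp n j x) = 0 := by
  apply LinearMap.ext
  intro c
  apply Subtype.ext
  show (c : ℂ) • (Pi.single j 1 : Fin (n+1) → ℂ) k = (0 : ℂ)
  simp [Pi.single_eq_of_ne (Ne.symm h)]

/-- The projection `M ⟶ P_i`. -/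
noncomputable def fnat (n : ℕ) (i : Fin (n+1)) : Mgrid n ⟶ Pfun n i where
  app x := ModuleCat.ofHom (fapp n i x)
  naturality x y f := rfl

/-- The inclusion `P_i ⟶ M`. -/
noncomputable def gnat (n : ℕ) (i : Fin (n+1)) : Pfun n i ⟶ Mgrid n where
  app x := ModuleCat.ofHom (gapp n i x)
  naturality x y f := rfl

/-- `M` is isomorphic to the direct sum `⨁_{i=0}^{n} P_i` in the functor category
`Fin (n+1) × Fin n ⥤ ModuleCat ℂ`. -/
theorem Mgrid_iso_biproduct (n : ℕ) (hn : 2 ≤ n) :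
    haveI : HasFiniteBiproducts ((Fin (n+1) × Fin n) ⥤ ModuleCat ℂ) :=
      Abelian.hasFiniteBiproducts
    Nonempty (Mgrid n ≅ ⨁ fun i : Fin (n+1) => Pfun n i) := by
  haveI : HasFiniteBiproducts ((Fin (n+1) × Fin n) ⥤ ModuleCat ℂ) :=
    Abelian.hasFiniteBiproducts
  refine ⟨{ hom := biproduct.lift (fnat n), inv := biproduct.desc (gnat n),
            hom_inv_id := ?_, inv_hom_id := ?_ }⟩
  · rw [biproduct.lift_desc]
    apply NatTrans.ext
    funext x
    rw [NatTrans.app_sum]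
    apply ModuleCat.hom_ext
    rw [ModuleCat.hom_sum]
    exact sum_gf n x
  · apply biproduct.hom_ext
    intro k
    apply biproduct.hom_ext'
    intro j
    simp only [Category.assoc, biproduct.lift_π, biproduct.ι_desc_assoc, Category.id_comp,
      biproduct.ι_π]
    by_cases h : j = k
    · subst h
      rw [dif_pos rfl]
      apply NatTrans.ext
      funext x
      apply ModuleCat.hom_ext
      exact fg_same n j x
    · rw [dif_neg h]
      apply NatTrans.ext
      funext x
      apply ModuleCat.hom_ext
      exact fg_ne n h x
end
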